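/- arXiv:1510.01657 — 2 statements merged into one kernel-verified Lean document; each statement's English description precedes it below -/
import Mathlib

section
/- Hermite reciprocity in one variable: for all nonnegative integers p and q, the complete homogeneous symmetric polynomial satisfies h_p(1, t, t^2, ..., t^q) = h_q(1, t, t^2, ..., t^p) as polynomials in t. -/
/-!
Write `F(p, q) = h_p(1, t, …, t^q)`. Splitting off the first variable `1` gives
`F(p+1, q+1) = F(p, q+1) + t^(p+1) F(p+1, q)` (the remaining variables are `t · (1, …, t^q)`),
while splitting off the last variable `t^(q+1)` gives
`F(p+1, q+1) = t^(q+1) F(p, q+1) + F(p+1, q)`.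
Exchanging `p` and `q` turns one recurrence into the other, and `F(p, 0) = F(0, q) = 1`,
so `F(p, q) = F(q, p)` by induction.
-/

/-- The complete homogeneous symmetric evaluation `h_n(θ_0, …, θ_{k-1})`:
the sum of all monomials of total degree `n` in the values `θ i`. -/
noncomputable def hfull {R : Type*} [CommSemiring R] (k n : ℕ) (θ : Fin k → R) : R :=
  ∑ f ∈ Finset.Nat.antidiagonalTuple k n, ∏ i, θ i ^ f i

open Finset Finset.Nat

section

variable {R : Type*} [CommSemiring R]

theorem hfull_zero_right (k : ℕ) (θ : Fin k → R) : hfull k 0 θ = 1 := by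
  simp [hfull, antidiagonalTuple_zero_right]

theorem hfull_one (n : ℕ) (θ : Fin 1 → R) : hfull 1 n θ = θ 0 ^ n := by
  simp [hfull]

theorem hfull_const_mul (k n : ℕ) (c : R) (θ : Fin k → R) :
    hfull k n (fun i => c * θ i) = c ^ n * hfull k n θ := by
  unfold hfull
  rw [mul_sum]
  refine sum_congr rfl fun f hf => ?_
  rw [mem_antidiagonalTuple] at hf
  simp_rw [mul_pow, prod_mul_distrib, prod_pow_eq_pow_sum, hf]

theorem hfull_comp_perm (k n : ℕ) (θ : Fin k → R) (σ : Equiv.Perm (Fin k)) :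
    hfull k n (θ ∘ σ) = hfull k n θ := by
  refine sum_nbij' (fun f => f ∘ σ.symm) (fun f => f ∘ σ) ?_ ?_ ?_ ?_ ?_
  · intro f hf
    simpa [mem_antidiagonalTuple, Equiv.sum_comp] using hf
  · intro f hf
    simpa [mem_antidiagonalTuple, Equiv.sum_comp] using hf
  · intro f _
    simp [Function.comp_def]
  · intro f _
    simp [Function.comp_def]
  · intro f _
    simpa using Equiv.prod_comp σ fun j => θ j ^ f (σ.symm j)

theorem hfull_succ (k n : ℕ) (θ : Fin (k + 1) → R) :
    hfull (k + 1) n θ =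
      ∑ ab ∈ antidiagonal n, θ 0 ^ ab.1 * hfull k ab.2 (Fin.tail θ) := by
  simp only [hfull, mul_sum]
  rw [sum_sigma']
  refine sum_nbij' (fun f => ⟨(f 0, ∑ i, Fin.tail f i), Fin.tail f⟩)
    (fun x => Fin.cons x.1.1 x.2) ?_ ?_ (fun f _ => Fin.cons_self_tail f) ?_ ?_
  · intro f hf
    simp_all [mem_antidiagonalTuple, Fin.sum_univ_succ, Fin.tail]
  · rintro ⟨⟨a, b⟩, g⟩ h
    simp_all [mem_antidiagonalTuple, Fin.sum_cons]
  · rintro ⟨⟨a, b⟩, g⟩ h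
    simp_all [mem_antidiagonalTuple]
  · intro f _
    simp [Fin.prod_univ_succ, Fin.tail]

theorem hfull_succ_succ (k n : ℕ) (θ : Fin (k + 1) → R) :
    hfull (k + 1) (n + 1) θ = θ 0 * hfull (k + 1) n θ + hfull k (n + 1) (Fin.tail θ) := by
  rw [hfull_succ, hfull_succ, sum_antidiagonal_succ, mul_sum, add_comm]
  simp [pow_succ', mul_assoc]

theorem hfull_succ_succ_last (k n : ℕ) (θ : Fin (k + 1) → R) :
    hfull (k + 1) (n + 1) θ =
      θ (Fin.last k) * hfull (k + 1) n θ + hfull k (n + 1) (Fin.init θ) := by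
  have tail_rev : Fin.tail (θ ∘ Fin.revPerm) = Fin.init θ ∘ Fin.revPerm := by
    funext i
    simp [Fin.tail, Fin.init, Fin.rev_succ]
  calc hfull (k + 1) (n + 1) θ = hfull (k + 1) (n + 1) (θ ∘ Fin.revPerm) :=
        (hfull_comp_perm _ _ _ _).symm
    _ = _ := by
        rw [hfull_succ_succ, tail_rev, hfull_comp_perm, hfull_comp_perm]
        simp

/-- `h_p(1, t, …, t^q)`, i.e. the Gaussian binomial coefficient `[p+q choose p]_t`. -/
noncomputable def hfullGeom (t : R) (p q : ℕ) : R :=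
  hfull (q + 1) p (fun i => t ^ (i : ℕ))

variable (t : R)

theorem hfullGeom_zero_left (q : ℕ) : hfullGeom t 0 q = 1 :=
  hfull_zero_right _ _

theorem hfullGeom_zero_right (p : ℕ) : hfullGeom t p 0 = 1 := by
  simp [hfullGeom, hfull_one]

theorem hfullGeom_succ_succ (p q : ℕ) :
    hfullGeom t (p + 1) (q + 1) =
      hfullGeom t p (q + 1) + t ^ (p + 1) * hfullGeom t (p + 1) q := by
  have tail_eq : Fin.tail (fun i : Fin (q + 2) => t ^ (i : ℕ)) =
      fun i : Fin (q + 1) => t * t ^ (i : ℕ) := by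
    funext i
    simp [Fin.tail, pow_succ']
  rw [hfullGeom, hfull_succ_succ, tail_eq, hfull_const_mul]
  simp [hfullGeom]

theorem hfullGeom_succ_succ_last (p q : ℕ) :
    hfullGeom t (p + 1) (q + 1) =
      t ^ (q + 1) * hfullGeom t p (q + 1) + hfullGeom t (p + 1) q := by
  rw [hfullGeom, hfull_succ_succ_last]
  rfl

theorem hfullGeom_comm (p q : ℕ) : hfullGeom t p q = hfullGeom t q p := by
  induction p generalizing q with
  | zero => rw [hfullGeom_zero_left, hfullGeom_zero_right]
  | succ p ihp =>
    induction q with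
    | zero => rw [hfullGeom_zero_left, hfullGeom_zero_right]
    | succ q ihq =>
      rw [hfullGeom_succ_succ, hfullGeom_succ_succ_last, ihp, ihq, add_comm]

end

/-- Hermite reciprocity in one variable:
`h_p(1, t, t^2, …, t^q) = h_q(1, t, t^2, …, t^p)` in `ℤ[t]`. -/
theorem hermite_reciprocity_one_var (p q : ℕ) :
    hfull (q + 1) p (fun i => (Polynomial.X : Polynomial ℤ) ^ (i : ℕ)) =
    hfull (p + 1) q (fun i => (Polynomial.X : Polynomial ℤ) ^ (i : ℕ)) :=
  hfullGeom_comm Polynomial.X p q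
end

section
/- Two-step reciprocity (n=1 even case): for positive integers u, v, z, the SL(2,ℂ)-characters agree: s_λ(x^{w}, ..., x^{-w}) for (λ, w+1) = ((v+z, v)-shape with multiplicities: λ = ((v+z)^v, v^u), w+1 = u+v+z) equals the corresponding character for λ' = ((u+v)^v, v^z) with w'+1 = v+2z. Concretely, P^{u+v+z-1}_{((v+z)^v, v^u)}(q) = P^{v+2z-1}_{((u+v)^v, v^z)}(q). -/
/-!
The partition `((u+v)^v, v^z)` is the transpose of `((v+z)^v, v^u)`, so the hook products of the
two sides agree. For either diagram the multiset of shifted contents `d + 1 + c(x)` is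
`{z + 1 + a + b | a < v, b < u + v + z}`.
-/

/-- The transpose (conjugate) partition: `λᵗ_j = #{i < N : λ_i > j}` (0-indexed),
for a partition `l` supported on indices `< N`. -/
def conj (l : ℕ → ℕ) (N : ℕ) : ℕ → ℕ := fun j => ((Finset.range N).filter fun i => j < l i).card

/-- The boxes `(i, j)` (0-indexed) of the Young diagram of `l` (with `l` antitone
and supported on indices `< N`, so all columns are `< l 0`). -/
def boxes (l : ℕ → ℕ) (N : ℕ) : Finset (ℕ × ℕ) :=
  (Finset.range N ×ˢ Finset.range (l 0)).filter fun p => p.2 < l p.1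

/-- The hook length of the (0-indexed) box `(i, j)`:
`(λ_i - 1 - j) + (λᵗ_j - 1 - i) + 1`. -/
def hook (l : ℕ → ℕ) (N i j : ℕ) : ℕ := (l i - 1 - j) + (conj l N j - 1 - i) + 1

/-- The `q`-analog `[a]_t = 1 + t + ⋯ + t^{a-1}`, evaluated at `t ∈ ℚ(q)`. -/
noncomputable def qv (t : RatFunc ℚ) (a : ℕ) : RatFunc ℚ := ∑ i ∈ Finset.range a, t ^ i

/-- `|λ| = Σ λ_i`, the size of the partition. -/
def psize (l : ℕ → ℕ) (N : ℕ) : ℕ := ∑ i ∈ Finset.range N, l i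

/-- `b(λ) = Σ_i (i-1)λ_i` (1-indexed), i.e. `Σ_i i·λ_i` with 0-indexing. -/
def bsum (l : ℕ → ℕ) (N : ℕ) : ℕ := ∑ i ∈ Finset.range N, i * l i

/-- The hook-content ratio `P^d_λ(t) = ∏_{u∈Y(λ)} [d+1+c(u)]_t / ∏_{u∈Y(λ)} [h(u)]_t`,
where `c(i,j) = j - i` is the content (so `d+1+c(u) = d+1+j-i` in `ℕ`), evaluated
at `t ∈ ℚ(q)`. -/
noncomputable def Pt (l : ℕ → ℕ) (N d : ℕ) (t : RatFunc ℚ) : RatFunc ℚ :=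
  (∏ p ∈ boxes l N, qv t (d + 1 + p.2 - p.1)) /
  (∏ p ∈ boxes l N, qv t (hook l N p.1 p.2))

/-- `P^d_λ(q)` as a rational function in `q`. -/
noncomputable def Pq (l : ℕ → ℕ) (N d : ℕ) : RatFunc ℚ := Pt l N d RatFunc.X

/-- The two-step staircase partition `(a^p, b^r)`: `p` parts equal to `a`
followed by `r` parts equal to `b` (with `a ≥ b`). -/
def twostep (a : ℕ) (p : ℕ) (b : ℕ) (r : ℕ) : ℕ → ℕ :=
  fun i => if i < p then a else if i < p + r then b else 0

open Finset

lemma mem_boxes {l : ℕ → ℕ} {N : ℕ} {p : ℕ × ℕ} :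
    p ∈ boxes l N ↔ p.1 < N ∧ p.2 < l 0 ∧ p.2 < l p.1 := by
  simp [boxes, and_assoc]

lemma prod_hook_eq_of_transpose {M : Type*} [CommMonoid M] (f : ℕ → M) {l l' : ℕ → ℕ}
    {N N' : ℕ} (hl : conj l N = l') (hl' : conj l' N' = l)
    (hboxes : ∀ i j, (i, j) ∈ boxes l N ↔ (j, i) ∈ boxes l' N') :
    ∏ x ∈ boxes l N, f (hook l N x.1 x.2) = ∏ x ∈ boxes l' N', f (hook l' N' x.1 x.2) := by
  refine prod_nbij' Prod.swap Prod.swap (fun x hx => (hboxes x.1 x.2).1 hx)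
    (fun x hx => (hboxes x.2 x.1).2 hx) (fun x _ => x.swap_swap) (fun x _ => x.swap_swap) ?_
  rintro ⟨i, j⟩ -
  subst hl
  simp only [hook, Prod.fst_swap, Prod.snd_swap, hl']
  ac_rfl

section Twostep

variable (b c p r : ℕ)

lemma mem_boxes_twostep {i j : ℕ} :
    (i, j) ∈ boxes (twostep (b + c) p b r) (p + r) ↔
      i < p ∧ j < b + c ∨ p ≤ i ∧ i < p + r ∧ j < b := by
  simp only [mem_boxes, twostep]
  split_ifs <;> omega

lemma conj_twostep : conj (twostep (b + c) p b r) (p + r) = twostep (p + r) b p c := by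
  funext j
  have : (range (p + r)).filter (fun i => j < twostep (b + c) p b r i) =
      range (twostep (p + r) b p c j) := by
    ext i
    rw [mem_filter, mem_range, mem_range, twostep, twostep]
    split_ifs <;> omega
  rw [conj, this, card_range]

variable {M : Type*} [CommMonoid M] (f : ℕ → M)

lemma prod_hook_twostep :
    ∏ x ∈ boxes (twostep (b + c) p b r) (p + r),
        f (hook (twostep (b + c) p b r) (p + r) x.1 x.2) =
      ∏ x ∈ boxes (twostep (p + r) b p c) (b + c),
        f (hook (twostep (p + r) b p c) (b + c) x.1 x.2) :=
  prod_hook_eq_of_transpose f (conj_twostep b c p r) (conj_twostep p r b c) fun i j => by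
    rw [mem_boxes_twostep, mem_boxes_twostep]
    omega

/-- The `v × (v + c)` block, turned upside down, and the transposed `r × v` block fit together
into a `v × (r + v + c)` rectangle, along whose antidiagonals the content is constant. -/
lemma prod_content_twostep (v e : ℕ) :
    ∏ x ∈ boxes (twostep (v + c) v v r) (v + r), f (e + r + v + x.2 - x.1) =
      ∏ y ∈ range v ×ˢ range (r + v + c), f (e + 1 + y.1 + y.2) := by
  refine prod_nbij' (fun x => if x.1 < v then (v - 1 - x.1, r + x.2) else (x.2, r + v - 1 - x.1))
    (fun y => if r ≤ y.2 then (v - 1 - y.1, y.2 - r) else (r + v - 1 - y.2, y.1)) ?_ ?_ ?_ ?_ ?_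
  all_goals
    rintro ⟨i, j⟩ h
    simp only [mem_boxes_twostep, mem_product, mem_range] at h
    dsimp only
  · split_ifs <;> simp only [mem_product, mem_range] <;> omega
  · split_ifs <;> simp only [mem_boxes_twostep] <;> omega
  · split_ifs <;> simp only [Prod.mk.injEq, and_true] at * <;> omega
  · split_ifs <;> simp only [Prod.mk.injEq, true_and] at * <;> omega
  · split_ifs <;> congr 1 <;> omega

end Twostep

theorem twostep_reciprocity_general (u v z : ℕ) (hv : 0 < v) :
    Pq (twostep (v + z) v v u) (v + u) (u + v + z - 1) =
    Pq (twostep (u + v) v v z) (v + z) (v + 2 * z - 1) := by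
  have hd : u + v + z - 1 + 1 = z + u + v := by omega
  have hd' : v + 2 * z - 1 + 1 = z + z + v := by omega
  rw [Pq, Pt, hd, prod_content_twostep, prod_hook_twostep, Pq, Pt, hd', add_comm u v,
    prod_content_twostep, show z + v + u = v + u + z by ring]

/-- Two-step reciprocity (n = 1, even case): for positive integers `u, v, z`,
`P^{u+v+z-1}_{((v+z)^v, v^u)}(q) = P^{v+2z-1}_{((u+v)^v, v^z)}(q)`. -/
theorem twostep_reciprocity (u v z : ℕ) (hu : 0 < u) (hv : 0 < v) (hz : 0 < z) :
    Pq (twostep (v + z) v v u) (v + u) (u + v + z - 1) =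
    Pq (twostep (u + v) v v z) (v + z) (v + 2 * z - 1) :=
  twostep_reciprocity_general u v z hv
end
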